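/- arXiv:2011.03606 — 10 statements merged into one kernel-verified Lean document; each statement's English description precedes it below -/
import Mathlib

section
/- Let λ be a p-core partition with at most m parts. Let 1 ≤ i < j ≤ m and let a, l be positive integers such that (λ+ρ)_i − (λ+ρ)_j = a + lp. Then the vector s_{ε_i−ε_j,l}(λ+ρ) = λ+ρ − a(e_i − e_j) has two equal entries; in particular it is not regular (representation-theoretically: the Weyl character χ(s_{ε_i−ε_j,l}·λ) vanishes, so roots ε_i−ε_j contribute no nonzero terms to the Jantzen Sum Formula for Sp_{2m}). -/
/-- ρ = (m, m-1, …, 1); with 0-indexed coordinates, ρ k = m - k. -/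
def rho {m : ℕ} : Fin m → ℤ := fun k => (m : ℤ) - (k : ℕ)

/-- A partition with at most m parts: weakly decreasing and nonnegative entries. -/
def IsPartitionVec {m : ℕ} (lam : Fin m → ℤ) : Prop :=
  (∀ i j : Fin m, i ≤ j → lam j ≤ lam i) ∧ ∀ i, 0 ≤ lam i

/-- The length of a partition: the number of nonzero entries. -/
def plen {m : ℕ} (lam : Fin m → ℤ) : ℕ :=
  (Finset.univ.filter fun i => lam i ≠ 0).card

/-- A vector is regular if all entries are nonzero and no two entries have
the same absolute value. -/
def Regular {m : ℕ} (v : Fin m → ℤ) : Prop :=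
  (∀ k, v k ≠ 0) ∧ ∀ k k', k ≠ k' → |v k| ≠ |v k'|

/-- Affine reflection s_{ε_i−ε_j,l}: x ↦ x − a(e_i − e_j), a = x_i − x_j − lp. -/
def sMinus {m : ℕ} (p : ℤ) (i j : Fin m) (l : ℤ) (x : Fin m → ℤ) : Fin m → ℤ :=
  fun k => x k - (x i - x j - l * p) * ((if k = i then 1 else 0) - (if k = j then 1 else 0))

/-- Affine reflection s_{ε_i+ε_j,l}: x ↦ x − a(e_i + e_j), a = x_i + x_j − lp. -/
def sPlus {m : ℕ} (p : ℤ) (i j : Fin m) (l : ℤ) (x : Fin m → ℤ) : Fin m → ℤ :=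
  fun k => x k - (x i + x j - l * p) * ((if k = i then 1 else 0) + (if k = j then 1 else 0))

/-- Affine reflection s_{2ε_i,l}: x ↦ x − 2a·e_i, a = x_i − lp. -/
def sDouble {m : ℕ} (p : ℤ) (i : Fin m) (l : ℤ) (x : Fin m → ℤ) : Fin m → ℤ :=
  fun k => x k - 2 * (x i - l * p) * (if k = i then 1 else 0)

/-- λ is a p-core: for every i and every l ≥ 1 with (λ+ρ)_i − lp > 0, the number
(λ+ρ)_i − lp occurs as an entry of λ+ρ. -/
def IsPCore {m : ℕ} (p : ℕ) (lam : Fin m → ℤ) : Prop :=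
  ∀ (i : Fin m) (l : ℤ), 1 ≤ l → 0 < lam i + rho i - l * p →
    ∃ j : Fin m, lam j + rho j = lam i + rho i - l * p

theorem statement0 (m p : ℕ) (hp : p.Prime) (hodd : Odd p)
    (lam : Fin m → ℤ) (hpart : IsPartitionVec lam) (hcore : IsPCore p lam)
    (i j : Fin m) (hij : i < j) (a l : ℤ) (ha : 0 < a) (hl : 0 < l)
    (heq : (lam i + rho i) - (lam j + rho j) = a + l * p) :
    (∃ k k' : Fin m, k ≠ k' ∧
        sMinus (p : ℤ) i j l (fun t => lam t + rho t) k =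
          sMinus (p : ℤ) i j l (fun t => lam t + rho t) k') ∧
    ¬ Regular (sMinus (p : ℤ) i j l (fun t => lam t + rho t)) := by

  have hpm : (0:ℤ) < p := by exact_mod_cast hp.pos
  have hlp : 0 < l * (p:ℤ) := mul_pos hl hpm
  have hxj : 0 < lam j + rho j := by
    have h1 : 0 ≤ lam j := hpart.2 j
    have h2 : ((j:ℕ):ℤ) < m := by exact_mod_cast j.isLt
    simp only [rho]; omega
  have hpos : 0 < lam i + rho i - l * p := by omega
  obtain ⟨k, hk⟩ := hcore i l hl hpos
  have hki : k ≠ i := by intro h; rw [h] at hk; omega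
  have hkj : k ≠ j := by intro h; rw [h] at hk; omega
  have hji : j ≠ i := (ne_of_lt hij).symm
  have hval : sMinus (p : ℤ) i j l (fun t => lam t + rho t) k =
      sMinus (p : ℤ) i j l (fun t => lam t + rho t) j := by
    simp only [sMinus, if_neg hki, if_neg hkj, if_neg hji, if_pos rfl, if_true]
    linarith
  refine ⟨⟨k, j, hkj, hval⟩, ?_⟩
  intro hreg
  exact hreg.2 k j hkj (by rw [hval])
end

section
/- Let λ be a p-core partition with at most m parts. Let 1 ≤ i < j ≤ m, let l ≥ 1 be an integer, and set a = (λ+ρ)_i + (λ+ρ)_j − lp. Assume a > 0, (λ+ρ)_j − a < 0, and that the vector s_{ε_i+ε_j,l}(λ+ρ) is regular. Then a = 2(λ+ρ)_j and (λ+ρ)_i − lp = (λ+ρ)_j. -/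
theorem statement1 (m p : ℕ) (hp : p.Prime) (hodd : Odd p)
    (lam : Fin m → ℤ) (hpart : IsPartitionVec lam) (hcore : IsPCore p lam)
    (i j : Fin m) (hij : i < j) (l : ℤ) (hl : 1 ≤ l)
    (a : ℤ) (hadef : a = (lam i + rho i) + (lam j + rho j) - l * p)
    (ha : 0 < a) (hneg : (lam j + rho j) - a < 0)
    (hreg : Regular (sPlus (p : ℤ) i j l (fun t => lam t + rho t))) :
    a = 2 * (lam j + rho j) ∧ (lam i + rho i) - l * p = lam j + rho j := by
  have hp2 : (2:ℤ) ≤ (p:ℤ) := by exact_mod_cast hp.two_le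
  have hlp : 0 < l * (p:ℤ) := by nlinarith
  have hxi : 0 < lam i + rho i - l * p := by omega
  obtain ⟨t, ht⟩ := hcore i l hl hxi
  have hti : t ≠ i := by intro h; rw [h] at ht; omega
  by_cases htj : t = j
  · rw [htj] at ht; constructor <;> omega
  · exfalso
    have hji : j ≠ i := (Fin.ne_of_lt hij).symm
    have hyj : sPlus (p:ℤ) i j l (fun t => lam t + rho t) j = lam j + rho j - a := by
      simp only [sPlus, if_neg hji, eq_self_iff_true, if_true]
      rw [hadef]; ring
    have hyt : sPlus (p:ℤ) i j l (fun t => lam t + rho t) t = lam t + rho t := by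
      simp only [sPlus, if_neg hti, if_neg htj]
      ring
    have h1 := hreg.2 j t (Ne.symm htj)
    apply h1
    rw [hyj, hyt, abs_of_neg hneg, abs_of_pos (by omega : 0 < lam t + rho t)]
    omega
end

section
/- Let λ be a p-core partition with at most m parts. Define S₁ as the set of triples (i,j,l) with 1 ≤ i < j ≤ m and l ≥ 1 an integer such that a := (λ+ρ)_i + (λ+ρ)_j − lp satisfies a > 0 and (λ+ρ)_j − a < 0, and the vector s_{ε_i+ε_j,l}(λ+ρ) is regular. Define S₂ as the set of pairs (i,l) with 1 ≤ i ≤ m and l ≥ 1 an integer such that (λ+ρ)_i − lp > 0 and the vector s_{2ε_i,l}(λ+ρ) is regular. Then the map (i,j,l) ↦ (i,l) is a bijection from S₁ onto S₂, and for every (i,j,l) ∈ S₁ the vectors s_{ε_i+ε_j,l}(λ+ρ) and s_{2ε_i,l}(λ+ρ) agree in all coordinates except the j-th, where they are each other's negatives (so the corresponding Weyl characters satisfy χ(s_{ε_i+ε_j,l}·λ) = −χ(s_{2ε_i,l}·λ), and in the Jantzen Sum Formula these contributions cancel pairwise). -/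
theorem statement2 (m p : ℕ) (hp : p.Prime) (hodd : Odd p)
    (lam : Fin m → ℤ) (hpart : IsPartitionVec lam) (hcore : IsPCore p lam)
    (v : Fin m → ℤ) (hv : v = fun t => lam t + rho t)
    (S1 : Set (Fin m × Fin m × ℤ))
    (hS1 : S1 = {t | t.1 < t.2.1 ∧ 1 ≤ t.2.2 ∧
        0 < v t.1 + v t.2.1 - t.2.2 * p ∧
        v t.2.1 - (v t.1 + v t.2.1 - t.2.2 * p) < 0 ∧
        Regular (sPlus (p : ℤ) t.1 t.2.1 t.2.2 v)})
    (S2 : Set (Fin m × ℤ))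
    (hS2 : S2 = {t | 1 ≤ t.2 ∧ 0 < v t.1 - t.2 * p ∧
        Regular (sDouble (p : ℤ) t.1 t.2 v)}) :
    Set.BijOn (fun t : Fin m × Fin m × ℤ => (t.1, t.2.2)) S1 S2 ∧
    ∀ t ∈ S1,
      (∀ k : Fin m, k ≠ t.2.1 →
        sPlus (p : ℤ) t.1 t.2.1 t.2.2 v k = sDouble (p : ℤ) t.1 t.2.2 v k) ∧
      sPlus (p : ℤ) t.1 t.2.1 t.2.2 v t.2.1 =
        - sDouble (p : ℤ) t.1 t.2.2 v t.2.1 := by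

  have hp0 : (0:ℤ) < p := by exact_mod_cast hp.pos
  have hv' : ∀ k, v k = lam k + rho k := fun k => by rw [hv]
  have vpos : ∀ k : Fin m, 0 < v k := by
    intro k
    have hk : (k:ℤ) < m := by exact_mod_cast k.2
    have h0 := hpart.2 k
    rw [hv']; simp only [rho]; linarith
  have vanti : ∀ i j : Fin m, i < j → v j < v i := by
    intro i j hij
    have h1 := hpart.1 i j (le_of_lt hij)
    have h2 : (i:ℤ) < (j:ℤ) := by exact_mod_cast hij
    rw [hv' i, hv' j]; simp only [rho]; linarith
  have vinj : ∀ a b : Fin m, v a = v b → a = b := by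
    intro a b hab
    rcases lt_trichotomy a b with h | h | h
    · exact absurd hab (ne_of_gt (vanti a b h))
    · exact h
    · exact absurd hab (ne_of_lt (vanti b a h))
  have regAbs : ∀ (w w' : Fin m → ℤ), (∀ k, |w' k| = |w k|) → Regular w → Regular w' := by
    intro w w' h hw
    refine ⟨fun k hk => hw.1 k ?_, fun k k' hkk' => by rw [h k, h k']; exact hw.2 k k' hkk'⟩
    have h0 : |w k| = 0 := by rw [← h k, hk, abs_zero]
    exact abs_eq_zero.mp h0
  -- coordinatewise comparison of sPlus and sDouble when v j = v i - l*p
  have hcomp : ∀ (i j : Fin m) (l : ℤ), i ≠ j → v j = v i - l * (p:ℤ) →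
      (∀ k : Fin m, k ≠ j → sPlus (p:ℤ) i j l v k = sDouble (p:ℤ) i l v k) ∧
      sPlus (p:ℤ) i j l v j = - sDouble (p:ℤ) i l v j := by
    intro i j l hij hvj
    have hji : j ≠ i := fun h => hij h.symm
    constructor
    · intro k hkj
      by_cases hki : k = i
      · subst hki
        simp [sPlus, sDouble, hkj]
        linarith
      · simp [sPlus, sDouble, hki, hkj]
    · simp [sPlus, sDouble, hji]
      linarith
  -- key lemma: membership in S1 forces v j = v i - l*p
  have hkey : ∀ t : Fin m × Fin m × ℤ, t ∈ S1 → v t.2.1 = v t.1 - t.2.2 * (p:ℤ) := by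
    rintro ⟨i, j, l⟩ ht
    rw [hS1] at ht
    obtain ⟨hij, hl, ha, hb, hreg⟩ := ht
    simp only at hij hl ha hb hreg ⊢
    have hpos : 0 < v i - l * (p:ℤ) := by linarith
    have hpos' : 0 < lam i + rho i - l * (p:ℤ) := by rw [← hv']; exact hpos
    obtain ⟨j0, hj0⟩ := hcore i l hl hpos'
    have hj0v : v j0 = v i - l * (p:ℤ) := by rw [hv' j0, hj0, hv']
    by_contra hne
    have hjj0 : j0 ≠ j := by intro h; exact hne (h ▸ hj0v)
    have hlp : 0 < l * (p:ℤ) := mul_pos (lt_of_lt_of_le one_pos hl) hp0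
    have hj0i : j0 ≠ i := by
      intro h; rw [h] at hj0v; linarith
    have hji : j ≠ i := hij.ne'
    have e1 : sPlus (p:ℤ) i j l v j0 = v j0 := by
      simp [sPlus, hj0i, hjj0]
    have e2 : sPlus (p:ℤ) i j l v j = -(v j0) := by
      simp [sPlus, hji]
      linarith
    have hne2 := hreg.2 j j0 (fun h => hjj0 h.symm)
    rw [e1, e2, abs_neg] at hne2
    exact hne2 rfl
  have habs : ∀ t : Fin m × Fin m × ℤ, t.1 ≠ t.2.1 → v t.2.1 = v t.1 - t.2.2 * (p:ℤ) →
      ∀ k : Fin m, |sPlus (p:ℤ) t.1 t.2.1 t.2.2 v k| = |sDouble (p:ℤ) t.1 t.2.2 v k| := by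
    rintro ⟨i, j, l⟩ hij hvj k
    obtain ⟨h1, h2⟩ := hcomp i j l hij hvj
    by_cases hkj : k = j
    · subst hkj; rw [h2, abs_neg]
    · rw [h1 k hkj]
  constructor
  · constructor
    · -- MapsTo
      rintro ⟨i, j, l⟩ ht
      have hvj := hkey _ ht
      rw [hS1] at ht
      obtain ⟨hij, hl, ha, hb, hreg⟩ := ht
      simp only at hij hl ha hb hreg hvj
      rw [hS2]
      refine ⟨hl, by simp only; linarith, ?_⟩
      exact regAbs _ _ (fun k => ((habs (i, j, l) hij.ne hvj k).symm)) hreg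
    constructor
    · -- InjOn
      rintro ⟨i, j, l⟩ ht ⟨i', j', l'⟩ ht' heq
      simp only [Prod.mk.injEq] at heq
      obtain ⟨hi, hl⟩ := heq
      subst hi; subst hl
      have k1 := hkey _ ht
      have k2 := hkey _ ht'
      simp only at k1 k2
      have : j = j' := vinj j j' (by rw [k1, k2])
      rw [this]
    · -- SurjOn
      rintro ⟨i, l⟩ ht
      rw [hS2] at ht
      obtain ⟨hl, hpos, hreg⟩ := ht
      simp only at hl hpos hreg
      have hpos' : 0 < lam i + rho i - l * (p:ℤ) := by rw [← hv']; exact hpos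
      obtain ⟨j0, hj0⟩ := hcore i l hl hpos'
      have hj0v : v j0 = v i - l * (p:ℤ) := by rw [hv' j0, hj0, hv']
      have hlp : 0 < l * (p:ℤ) := mul_pos (lt_of_lt_of_le one_pos hl) hp0
      have hvlt : v j0 < v i := by linarith
      have hij0 : i < j0 := by
        rcases lt_trichotomy i j0 with h | h | h
        · exact h
        · exact absurd (h ▸ hvlt) (lt_irrefl _)
        · exact absurd (vanti j0 i h) (not_lt.mpr hvlt.le)
      have hvj0pos : 0 < v j0 := vpos j0
      refine ⟨(i, j0, l), ?_, rfl⟩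
      rw [hS1]
      refine ⟨hij0, hl, by simp only; linarith, by simp only; linarith, ?_⟩
      exact regAbs _ _ (habs (i, j0, l) hij0.ne hj0v) hreg
  · -- coordinate comparison for all t ∈ S1
    rintro ⟨i, j, l⟩ ht
    have hvj := hkey _ ht
    have hij : i ≠ j := by
      rw [hS1] at ht; exact ht.1.ne
    exact hcomp i j l hij hvj
end

section
/- Let λ be a p-core partition with at most m parts. Let 1 ≤ i < j ≤ m with j > l(λ), let l ≥ 1 be an integer, set a = (λ+ρ)_i + (λ+ρ)_j − lp, and assume a > 0 and that the vector s_{ε_i+ε_j,l}(λ+ρ) is regular. Then (λ+ρ)_j − a < 0. -/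
theorem statement3 (m p : ℕ) (hp : p.Prime) (hodd : Odd p)
    (lam : Fin m → ℤ) (hpart : IsPartitionVec lam) (hcore : IsPCore p lam)
    (i j : Fin m) (hij : i < j) (hjlen : plen lam ≤ (j : ℕ))
    (l : ℤ) (hl : 1 ≤ l)
    (a : ℤ) (hadef : a = (lam i + rho i) + (lam j + rho j) - l * p)
    (ha : 0 < a)
    (hreg : Regular (sPlus (p : ℤ) i j l (fun t => lam t + rho t))) :
    (lam j + rho j) - a < 0 := by
  by_contra hcon
  push_neg at hcon
  have hne : j ≠ i := Fin.ne_of_gt hij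
  -- value of the reflected vector at j
  have hvj : sPlus (p : ℤ) i j l (fun t => lam t + rho t) j = (lam j + rho j) - a := by
    simp only [sPlus, if_pos rfl, if_neg hne, hadef, if_true]
    ring
  -- strict positivity from regularity
  have hpos : 0 < (lam j + rho j) - a := by
    rcases lt_or_eq_of_le hcon with h | h
    · exact h
    · exact absurd (hvj.trans h.symm) (hreg.1 j)
  -- lam j = 0
  have hlamj : lam j = 0 := by
    by_contra h
    have hsub : Finset.Iic j ⊆ Finset.univ.filter fun k => lam k ≠ 0 := by
      intro k hk
      simp only [Finset.mem_Iic] at hk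
      simp only [Finset.mem_filter, Finset.mem_univ, true_and]
      intro hk0
      exact h (le_antisymm (by rw [← hk0]; exact hpart.1 k j hk) (hpart.2 j))
    have hcard := Finset.card_le_card hsub
    rw [Fin.card_Iic] at hcard
    have : plen lam ≥ (j : ℕ) + 1 := hcard
    omega
  have hrhoj : rho j = (m : ℤ) - (j : ℕ) := rfl
  -- define c
  set c : ℤ := (lam j + rho j) - a with hc
  have hcm : c < (m : ℤ) - (j : ℕ) := by
    rw [hc, hlamj, hrhoj] at *
    omega
  have hjm : (j : ℕ) < m := j.2
  -- natural number version
  have hcn0 : 0 < c.toNat := by omega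
  have hcnval : (c.toNat : ℤ) = c := Int.toNat_of_nonneg hpos.le
  have hcnlt : c.toNat < m - (j : ℕ) := by omega
  -- the index k with mu k = c
  set kv : ℕ := m - c.toNat with hkv
  have hkvm : kv < m := by omega
  have hkvj : (j : ℕ) < kv := by omega
  set k : Fin m := ⟨kv, hkvm⟩ with hk
  have hkj : k ≠ j := by
    intro h
    have : kv = (j : ℕ) := congrArg Fin.val h
    omega
  have hki : k ≠ i := by
    intro h
    have : kv = (i : ℕ) := congrArg Fin.val h
    have : (i : ℕ) < (j : ℕ) := hij
    omega
  have hlamk : lam k = 0 := by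
    have h1 : lam k ≤ lam j := hpart.1 j k (by exact Fin.le_of_lt hkvj)
    have h2 : 0 ≤ lam k := hpart.2 k
    omega
  have hmuk : lam k + rho k = c := by
    rw [hlamk, hk]
    show (0 : ℤ) + ((m : ℤ) - (kv : ℕ)) = c
    have : (kv : ℤ) = (m : ℤ) - c := by
      rw [hkv]
      push_cast [Nat.cast_sub (by omega : c.toNat ≤ m)]
      omega
    omega
  have hvk : sPlus (p : ℤ) i j l (fun t => lam t + rho t) k = c := by
    simp only [sPlus, if_neg hki, if_neg hkj]
    rw [hmuk]; ring
  exact hreg.2 k j hkj (by rw [hvk, hvj])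
end

section
/- Let λ be a p-core partition with at most m parts of length l(λ). Suppose (i,j,a,l) and (i',j',a',l') both satisfy: 1 ≤ i < j ≤ l(λ) (resp. 1 ≤ i' < j' ≤ l(λ)), a, l ≥ 1 (resp. a', l' ≥ 1) are integers with (λ+ρ)_i + (λ+ρ)_j = a + lp and (λ+ρ)_j − a > 0 (resp. the primed conditions), and the vectors s_{ε_i+ε_j,l}(λ+ρ) and s_{ε_{i'}+ε_{j'},l'}(λ+ρ) are regular. If the weakly decreasing rearrangements of s_{ε_i+ε_j,l}(λ+ρ) and of s_{ε_{i'}+ε_{j'},l'}(λ+ρ) coincide, then i = i', j = j', a = a' and l = l'. -/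
lemma sum_two_aux {m : ℕ} (f : Fin m → ℤ) (i j : Fin m) (hij : i ≠ j)
    (h : ∀ k, k ≠ i → k ≠ j → f k = 0) :
    ∑ k, f k = f i + f j := by
  rw [← Finset.sum_subset (Finset.subset_univ {i, j})]
  · rw [Finset.sum_pair hij]
  · intro x _ hx
    simp only [Finset.mem_insert, Finset.mem_singleton, not_or] at hx
    exact h x hx.1 hx.2

theorem statement5 (m p : ℕ) (hp : p.Prime) (hodd : Odd p)
    (lam : Fin m → ℤ) (hpart : IsPartitionVec lam) (hcore : IsPCore p lam)
    (i j i' j' : Fin m) (hij : i < j) (hij' : i' < j')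
    (hjlen : (j : ℕ) < plen lam) (hjlen' : (j' : ℕ) < plen lam)
    (a l a' l' : ℤ) (ha : 1 ≤ a) (hl : 1 ≤ l) (ha' : 1 ≤ a') (hl' : 1 ≤ l')
    (heq : (lam i + rho i) + (lam j + rho j) = a + l * p)
    (heq' : (lam i' + rho i') + (lam j' + rho j') = a' + l' * p)
    (hpos : 0 < (lam j + rho j) - a) (hpos' : 0 < (lam j' + rho j') - a')
    (hreg : Regular (sPlus (p : ℤ) i j l (fun t => lam t + rho t)))
    (hreg' : Regular (sPlus (p : ℤ) i' j' l' (fun t => lam t + rho t)))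
    (hsort : ∃ σ τ : Equiv.Perm (Fin m),
      (∀ k k' : Fin m, k ≤ k' →
        sPlus (p : ℤ) i j l (fun t => lam t + rho t) (σ k') ≤
          sPlus (p : ℤ) i j l (fun t => lam t + rho t) (σ k)) ∧
      (∀ k k' : Fin m, k ≤ k' →
        sPlus (p : ℤ) i' j' l' (fun t => lam t + rho t) (τ k') ≤
          sPlus (p : ℤ) i' j' l' (fun t => lam t + rho t) (τ k)) ∧
      ∀ k, sPlus (p : ℤ) i j l (fun t => lam t + rho t) (σ k) =
        sPlus (p : ℤ) i' j' l' (fun t => lam t + rho t) (τ k)) :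
    i = i' ∧ j = j' ∧ a = a' ∧ l = l' := by
  classical
  obtain ⟨σ, τ, -, -, hmatch⟩ := hsort
  set μ : Fin m → ℤ := fun t => lam t + rho t with hμdef
  set v : Fin m → ℤ := sPlus (p : ℤ) i j l μ with hvdef
  set v' : Fin m → ℤ := sPlus (p : ℤ) i' j' l' μ with hv'def
  have hμ : ∀ t, μ t = lam t + rho t := fun t => rfl
  have hpp : (0 : ℤ) < (p : ℤ) := by exact_mod_cast hp.pos
  -- strict monotonicity and injectivity of μ
  have hmono : ∀ k k' : Fin m, k < k' → μ k' < μ k := by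
    intro k k' hk
    have h1 := hpart.1 k k' hk.le
    have h2 : (k : ℕ) < (k' : ℕ) := hk
    simp only [hμ, rho]
    omega
  have hinj : ∀ k k' : Fin m, μ k = μ k' → k = k' := by
    intro k k' h
    rcases lt_trichotomy k k' with h1 | h1 | h1
    · exact absurd h (by have := hmono k k' h1; omega)
    · exact h1
    · exact absurd h (by have := hmono k' k h1; omega)
  have hane : μ i + μ j - l * (p : ℤ) = a := by simp only [hμ]; linarith
  have hane' : μ i' + μ j' - l' * (p : ℤ) = a' := by simp only [hμ]; linarith
  have hv : ∀ k, v k = μ k - a * ((if k = i then 1 else 0) + (if k = j then 1 else 0)) := by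
    intro k
    rw [hvdef]
    simp only [sPlus]
    rw [hane]
  have hv' : ∀ k, v' k = μ k - a' * ((if k = i' then 1 else 0) + (if k = j' then 1 else 0)) := by
    intro k
    rw [hv'def]
    simp only [sPlus]
    rw [hane']
  have hvi : v i = μ i - a := by rw [hv]; simp [hij.ne]
  have hvj : v j = μ j - a := by rw [hv]; simp [hij.ne']
  have hv'i : v' i' = μ i' - a' := by rw [hv']; simp [hij'.ne]
  have hv'j : v' j' = μ j' - a' := by rw [hv']; simp [hij'.ne']
  have hvk : ∀ k, k ≠ i → k ≠ j → v k = μ k := by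
    intro k h1 h2; rw [hv]; simp [h1, h2]
  have hv'k : ∀ k, k ≠ i' → k ≠ j' → v' k = μ k := by
    intro k h1 h2; rw [hv']; simp [h1, h2]
  -- the matching permutation
  have key : ∀ k, v' k = v (σ (τ.symm k)) :=
    fun k => ((hmatch (τ.symm k)).trans (by rw [Equiv.apply_symm_apply])).symm
  -- sums
  have hsum : ∑ k, v k = (∑ k, μ k) - 2 * a := by
    have h0 : ∑ k, (v k - μ k) = (v i - μ i) + (v j - μ j) :=
      sum_two_aux _ i j hij.ne (fun k h1 h2 => by rw [hvk k h1 h2]; ring)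
    rw [Finset.sum_sub_distrib, hvi, hvj] at h0
    linarith
  have hsum' : ∑ k, v' k = (∑ k, μ k) - 2 * a' := by
    have h0 : ∑ k, (v' k - μ k) = (v' i' - μ i') + (v' j' - μ j') :=
      sum_two_aux _ i' j' hij'.ne (fun k h1 h2 => by rw [hv'k k h1 h2]; ring)
    rw [Finset.sum_sub_distrib, hv'i, hv'j] at h0
    linarith
  have hsq : ∑ k, (v k) ^ 2 = (∑ k, (μ k) ^ 2) - 2 * a * (μ i + μ j) + 2 * a ^ 2 := by
    have h0 : ∑ k, ((v k) ^ 2 - (μ k) ^ 2)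
        = ((v i) ^ 2 - (μ i) ^ 2) + ((v j) ^ 2 - (μ j) ^ 2) :=
      sum_two_aux _ i j hij.ne (fun k h1 h2 => by rw [hvk k h1 h2]; ring)
    rw [Finset.sum_sub_distrib, hvi, hvj] at h0
    linear_combination h0
  have hsq' : ∑ k, (v' k) ^ 2 = (∑ k, (μ k) ^ 2) - 2 * a' * (μ i' + μ j') + 2 * a' ^ 2 := by
    have h0 : ∑ k, ((v' k) ^ 2 - (μ k) ^ 2)
        = ((v' i') ^ 2 - (μ i') ^ 2) + ((v' j') ^ 2 - (μ j') ^ 2) :=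
      sum_two_aux _ i' j' hij'.ne (fun k h1 h2 => by rw [hv'k k h1 h2]; ring)
    rw [Finset.sum_sub_distrib, hv'i, hv'j] at h0
    linear_combination h0
  have hsumeq : ∑ k, v' k = ∑ k, v k := by
    calc ∑ k, v' k = ∑ k, v ((τ.symm.trans σ) k) := by
          refine Finset.sum_congr rfl fun k _ => ?_
          rw [Equiv.trans_apply]; exact key k
      _ = ∑ k, v k := Equiv.sum_comp _ v
  have hsqeq : ∑ k, (v' k) ^ 2 = ∑ k, (v k) ^ 2 := by
    calc ∑ k, (v' k) ^ 2 = ∑ k, (fun t => (v t) ^ 2) ((τ.symm.trans σ) k) := by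
          refine Finset.sum_congr rfl fun k _ => ?_
          simp only [Equiv.trans_apply]
          rw [key k]
      _ = ∑ k, (v k) ^ 2 := Equiv.sum_comp _ (fun t => (v t) ^ 2)
  -- a = a'
  have haa : a = a' := by
    rw [hsum, hsum'] at hsumeq; linarith
  -- μ i + μ j = μ i' + μ j'
  have hXY : μ i + μ j = μ i' + μ j' := by
    rw [hsq, hsq', ← haa] at hsqeq
    have h2 : 2 * a * (μ i' + μ j') = 2 * a * (μ i + μ j) := by linarith
    have h2a : (2 * a : ℤ) ≠ 0 := by omega
    exact (mul_left_cancel₀ h2a h2).symm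
  -- l = l'
  have hll : l = l' := by
    have hppne : (p : ℤ) ≠ 0 := ne_of_gt hpp
    have : l * (p : ℤ) = l' * (p : ℤ) := by
      rw [← haa] at hane'; linarith
    exact mul_right_cancel₀ hppne this
  -- μ i is not a value of v, μ i' is not a value of v'
  have hnoti : ∀ k, v k ≠ μ i := by
    intro k hk
    by_cases h1 : k = i
    · subst h1; rw [hvi] at hk; omega
    by_cases h2 : k = j
    · subst h2
      rw [hvj] at hk
      have hm := hmono i k hij
      omega
    · rw [hvk k h1 h2] at hk
      exact h1 (hinj k i hk)
  have hnoti' : ∀ k, v' k ≠ μ i' := by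
    intro k hk
    by_cases h1 : k = i'
    · subst h1; rw [hv'i] at hk; omega
    by_cases h2 : k = j'
    · subst h2
      rw [hv'j] at hk
      have hm := hmono i' k hij'
      omega
    · rw [hv'k k h1 h2] at hk
      exact h1 (hinj k i' hk)
  -- i ∈ {i', j'}
  have hi1 : i = i' ∨ i = j' := by
    by_contra hcon
    push_neg at hcon
    have h3 : v' i = μ i := hv'k i hcon.1 hcon.2
    exact hnoti _ ((key i).symm.trans h3)
  -- i' ∈ {i, j}
  have hi2 : i' = i ∨ i' = j := by
    by_contra hcon
    push_neg at hcon
    have h3 : v i' = μ i' := hvk i' hcon.1 hcon.2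
    have h4 : v' (τ (σ.symm i')) = v i' := by
      rw [key (τ (σ.symm i')), Equiv.symm_apply_apply, Equiv.apply_symm_apply]
    exact hnoti' _ (h4.trans h3)
  -- conclude i = i'
  have hii : i = i' := by
    rcases hi1 with h | h
    · exact h
    · exfalso
      rcases hi2 with h' | h'
      · rw [h'] at hij'
        rw [← h] at hij'
        exact lt_irrefl _ hij'
      · have : i < i := by
          calc i < j := hij
            _ = i' := h'.symm
            _ < j' := hij'
            _ = i := h.symm
        exact lt_irrefl _ this
  have hjj : j = j' := by
    apply hinj
    rw [hii] at hXY
    linarith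
  exact ⟨hii, hjj, haa, hll⟩
end

section
/- Let λ be a partition with at most m parts such that λ_1 + l(λ) ≤ p. Let 1 ≤ i < j ≤ l(λ) and let a, l ≥ 1 be integers with (λ+ρ)_i + (λ+ρ)_j = a + lp, and assume the vector s_{ε_i+ε_j,l}(λ+ρ) is regular. Then (λ+ρ)_j − a > 0 and a < p − 1. (In other words, for such λ every nonzero contribution of a root ε_i+ε_j with i < j ≤ l(λ) to the Jantzen Sum Formula is a surviving contribution.) -/
lemma plen_iff {m : ℕ} (lam : Fin m → ℤ) (hpart : IsPartitionVec lam) (t : Fin m) :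
    (t : ℕ) < plen lam ↔ lam t ≠ 0 := by
  constructor
  · intro h h0
    have hsub : (Finset.univ.filter fun i => lam i ≠ 0) ⊆ Finset.Iio t := by
      intro s hs
      simp only [Finset.mem_filter, Finset.mem_univ, true_and] at hs
      simp only [Finset.mem_Iio]
      by_contra hlt
      push_neg at hlt
      exact hs (le_antisymm (h0 ▸ hpart.1 t s hlt) (hpart.2 s))
    have := Finset.card_le_card hsub
    rw [Fin.card_Iio] at this
    exact absurd h (by unfold plen; omega)
  · intro h
    have hsub : Finset.Iic t ⊆ (Finset.univ.filter fun i => lam i ≠ 0) := by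
      intro s hs
      simp only [Finset.mem_Iic] at hs
      simp only [Finset.mem_filter, Finset.mem_univ, true_and]
      intro h0
      have := hpart.1 s t hs
      have := hpart.2 t
      omega
    have := Finset.card_le_card hsub
    rw [Fin.card_Iic] at this
    unfold plen; omega

lemma exists_tail {m : ℕ} (lam : Fin m → ℤ) (hpart : IsPartitionVec lam) (v : ℤ)
    (h1 : 1 ≤ v) (h2 : v + (plen lam : ℤ) ≤ (m : ℤ)) :
    ∃ t : Fin m, (plen lam : ℤ) ≤ (t : ℕ) ∧ lam t + rho t = v := by
  have hv1 : 1 ≤ v.toNat := by omega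
  have hv2 : v.toNat + plen lam ≤ m := by omega
  refine ⟨⟨m - v.toNat, by omega⟩, by simp; omega, ?_⟩
  have h0 : lam ⟨m - v.toNat, by omega⟩ = 0 := by
    by_contra h0
    have := (plen_iff lam hpart ⟨m - v.toNat, by omega⟩).2 h0
    simp at this; omega
  rw [h0, rho]
  simp
  omega

theorem statement7 (m p : ℕ) (hp : p.Prime) (hodd : Odd p) (hm : 0 < m)
    (lam : Fin m → ℤ) (hpart : IsPartitionVec lam)
    (hhook : lam ⟨0, hm⟩ + (plen lam : ℤ) ≤ (p : ℤ))
    (i j : Fin m) (hij : i < j) (hjlen : (j : ℕ) < plen lam)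
    (a l : ℤ) (ha : 1 ≤ a) (hl : 1 ≤ l)
    (heq : (lam i + rho i) + (lam j + rho j) = a + l * p)
    (hreg : Regular (sPlus (p : ℤ) i j l (fun t => lam t + rho t))) :
    0 < (lam j + rho j) - a ∧ a < (p : ℤ) - 1 := by
  have hinej : i ≠ j := ne_of_lt hij
  have hij' : (i : ℕ) < (j : ℕ) := hij
  -- value at j of sPlus
  have hsj : sPlus (p : ℤ) i j l (fun t => lam t + rho t) j = (lam j + rho j) - a := by
    have : ¬ (j = i) := Ne.symm hinej
    simp only [sPlus, if_neg this, if_pos rfl, eq_self_iff_true, if_true]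
    linarith
  -- basic bounds
  have hL : plen lam ≤ m := by
    have := Finset.card_filter_le (Finset.univ : Finset (Fin m)) (fun i => lam i ≠ 0)
    simpa [plen] using this
  have hilen : (i : ℕ) < plen lam := lt_trans hij' hjlen
  have hlam0i : lam i ≤ lam ⟨0, hm⟩ := hpart.1 ⟨0, hm⟩ i (by simp [Fin.le_def])
  have hlam0j : lam j ≤ lam ⟨0, hm⟩ := hpart.1 ⟨0, hm⟩ j (by simp [Fin.le_def])
  have hrhoi : rho i = (m : ℤ) - (i : ℕ) := rfl
  have hrhoj : rho j = (m : ℤ) - (j : ℕ) := rfl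
  have hp2 : (2 : ℤ) ≤ (p : ℤ) := by exact_mod_cast hp.two_le
  -- generic contradiction: if |(lam j + rho j) - a| is in [1, m - plen lam], contradiction
  have key : ∀ v : ℤ, 1 ≤ v → v + (plen lam : ℤ) ≤ (m : ℤ) →
      |(lam j + rho j) - a| = v → False := by
    intro v hv1 hv2 habs
    obtain ⟨t, htL, htv⟩ := exists_tail lam hpart v hv1 hv2
    have htj : j ≠ t := by
      intro h; rw [← h] at htL; omega
    have hti : t ≠ i := by
      intro h; rw [h] at htL; omega
    have hst : sPlus (p : ℤ) i j l (fun t => lam t + rho t) t = lam t + rho t := by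
      have htj' : t ≠ j := Ne.symm htj
      simp [sPlus, hti, htj']
    have := hreg.2 j t htj
    rw [hsj, hst, habs, htv] at this
    exact this (abs_of_pos (by omega)).symm
  have hjge1 : 1 ≤ (j : ℕ) := by omega
  have hlamj : 1 ≤ lam j := by
    have := (plen_iff lam hpart j).1 hjlen
    have := hpart.2 j
    omega
  constructor
  · by_contra hneg
    push_neg at hneg
    have hne : (lam j + rho j) - a ≠ 0 := by
      have := hreg.1 j; rw [hsj] at this; exact this
    have hv1 : 1 ≤ a - (lam j + rho j) := by omega
    -- a - μ_j = μ_i - l p ≤ m - L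
    have hv2 : (a - (lam j + rho j)) + (plen lam : ℤ) ≤ (m : ℤ) := by
      have : a - (lam j + rho j) = (lam i + rho i) - l * p := by linarith
      rw [this, hrhoi]
      have hlp : (p : ℤ) ≤ l * p := le_mul_of_one_le_left (by linarith) hl
      have : lam i ≤ (p : ℤ) - (plen lam : ℤ) := by linarith
      have hi0 : (0 : ℤ) ≤ (i : ℕ) := by positivity
      linarith
    have hlt : (lam j + rho j) - a < 0 := lt_of_le_of_ne hneg hne
    exact key (a - (lam j + rho j)) hv1 hv2 (by rw [abs_of_neg hlt]; ring)
  · have hpos : 0 < (lam j + rho j) - a := by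
      by_contra hneg
      push_neg at hneg
      have hne : (lam j + rho j) - a ≠ 0 := by
        have := hreg.1 j; rw [hsj] at this; exact this
      have hv1 : 1 ≤ a - (lam j + rho j) := by omega
      have hv2 : (a - (lam j + rho j)) + (plen lam : ℤ) ≤ (m : ℤ) := by
        have : a - (lam j + rho j) = (lam i + rho i) - l * p := by linarith
        rw [this, hrhoi]
        have hlp : (p : ℤ) ≤ l * p := le_mul_of_one_le_left (by linarith) hl
        have : lam i ≤ (p : ℤ) - (plen lam : ℤ) := by linarith
        have hi0 : (0 : ℤ) ≤ (i : ℕ) := by positivity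
        linarith
      have hlt : (lam j + rho j) - a < 0 := lt_of_le_of_ne hneg hne
      exact key (a - (lam j + rho j)) hv1 hv2 (by rw [abs_of_neg hlt]; ring)
    by_contra hbig
    push_neg at hbig
    have hv1 : 1 ≤ (lam j + rho j) - a := by omega
    have hv2 : ((lam j + rho j) - a) + (plen lam : ℤ) ≤ (m : ℤ) := by
      rw [hrhoj]
      have : lam j ≤ (p : ℤ) - (plen lam : ℤ) := by linarith
      have hjge1' : (1 : ℤ) ≤ (j : ℕ) := by exact_mod_cast hjge1
      linarith
    exact key ((lam j + rho j) - a) hv1 hv2 (abs_of_pos hpos)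
end

section
/- Let λ be a partition with at most m parts such that λ_1 + l(λ) ≤ p, and let μ be a partition with at most m parts such that μ ⪯ λ. Then μ_k ≤ λ_k for all k ∈ {1,…,m}, and |λ| − |μ| is even. -/
/-- One step of the order ⪯: mu is obtained from nu by applying a reflection
s_{ε_i+ε_j,l} with 1 ≤ i < j ≤ l(nu), l ≥ 1, (nu+ρ)_i + (nu+ρ)_j − lp ≥ 1,
such that all entries of s_{ε_i+ε_j,l}(nu+ρ) are pairwise distinct and strictly
positive, followed by a permutation of the coordinates moving only the first
l(nu) coordinates; the result mu is again a partition. -/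
def PrecStep {m : ℕ} (p : ℕ) (nu mu : Fin m → ℤ) : Prop :=
  IsPartitionVec mu ∧
  ∃ (i j : Fin m) (l : ℤ) (w : Equiv.Perm (Fin m)),
    i < j ∧ (j : ℕ) < plen nu ∧ 1 ≤ l ∧
    1 ≤ (nu i + rho i) + (nu j + rho j) - l * p ∧
    (∀ k k' : Fin m, k ≠ k' →
      sPlus (p : ℤ) i j l (fun t => nu t + rho t) k ≠
        sPlus (p : ℤ) i j l (fun t => nu t + rho t) k') ∧
    (∀ k, 0 < sPlus (p : ℤ) i j l (fun t => nu t + rho t) k) ∧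
    (∀ k : Fin m, plen nu ≤ (k : ℕ) → w k = k) ∧
    ∀ k, mu k + rho k = sPlus (p : ℤ) i j l (fun t => nu t + rho t) (w k)

/-- μ ⪯ λ: there is a chain λ = λ^1, …, λ^t = μ of partitions, each obtained
from the previous one by a `PrecStep`. -/
def Prec {m : ℕ} (p : ℕ) (mu lam : Fin m → ℤ) : Prop :=
  Relation.ReflTransGen (PrecStep p) lam mu

/-!
A step replaces `ν + ρ` by a permutation of `s(ν + ρ)`, where `s = s_{ε_i+ε_j,l}` lowers the
coordinates `i` and `j` by `a = (ν+ρ)_i + (ν+ρ)_j - lp ≥ 1` and fixes the others. So the sum drops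
by `2a`. Since `ν + ρ` and `μ + ρ` are both decreasing, the sorted rearrangement `μ + ρ` of the
vector `s(ν + ρ) ≤ ν + ρ` still lies below `ν + ρ`, which gives `μ ≤ ν` coordinatewise.
-/

open Finset

lemma rho_antitone {m : ℕ} : Antitone (rho (m := m)) := by
  intro s t hst
  have : ((s : ℕ) : ℤ) ≤ (t : ℕ) := by exact_mod_cast hst
  simp only [rho]
  omega

lemma IsPartitionVec.antitone_add_rho {m : ℕ} {nu : Fin m → ℤ} (hnu : IsPartitionVec nu) :
    Antitone fun t => nu t + rho t :=
  fun s t hst => add_le_add (hnu.1 s t hst) (rho_antitone hst)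

lemma sPlus_le {m : ℕ} {p l : ℤ} {i j : Fin m} {x : Fin m → ℤ} (ha : 0 ≤ x i + x j - l * p)
    (k : Fin m) : sPlus p i j l x k ≤ x k := by
  have : (0 : ℤ) ≤ (if k = i then 1 else 0) + (if k = j then 1 else 0) := by positivity
  simp only [sPlus]
  nlinarith

lemma sum_sPlus {m : ℕ} (p l : ℤ) (i j : Fin m) (x : Fin m → ℤ) :
    ∑ k, sPlus p i j l x k = ∑ k, x k - 2 * (x i + x j - l * p) := by
  have hcount : ∑ k : Fin m, ((if k = i then (1 : ℤ) else 0) + if k = j then 1 else 0) = 2 := by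
    simp only [sum_add_distrib, sum_ite_eq', mem_univ, if_true]
    norm_num
  simp only [sPlus]
  rw [sum_sub_distrib, ← mul_sum, hcount]
  ring

/-- Pigeonhole: `w` cannot map all of `{0, …, k}` into `{0, …, k - 1}`. -/
lemma Equiv.Perm.exists_le_le_apply {m : ℕ} (w : Equiv.Perm (Fin m)) (k : Fin m) :
    ∃ t ≤ k, k ≤ w t := by
  by_contra! h
  have hmaps : (Iic k).image w ⊆ Iio k := by
    intro x hx
    obtain ⟨t, ht, rfl⟩ := mem_image.mp hx
    exact mem_Iio.mpr (h t (mem_Iic.mp ht))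
  have := (card_image_of_injective _ w.injective).symm.trans_le (card_le_card hmaps)
  rw [Fin.card_Iic, Fin.card_Iio] at this
  omega

lemma le_of_antitone_of_eq_perm {m : ℕ} {f g s : Fin m → ℤ} (hf : Antitone f) (hg : Antitone g)
    (hsf : ∀ k, s k ≤ f k) (w : Equiv.Perm (Fin m)) (hgs : ∀ k, g k = s (w k)) (k : Fin m) :
    g k ≤ f k := by
  obtain ⟨t, htk, hkt⟩ := w.exists_le_le_apply k
  calc g k ≤ g t := hg htk
    _ = s (w t) := hgs t
    _ ≤ f (w t) := hsf (w t)
    _ ≤ f k := hf hkt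

lemma PrecStep.le {m p : ℕ} {nu mu : Fin m → ℤ} (hnu : IsPartitionVec nu)
    (h : PrecStep p nu mu) (k : Fin m) : mu k ≤ nu k := by
  obtain ⟨hmu, i, j, l, w, -, -, -, ha, -, -, -, heq⟩ := h
  have := le_of_antitone_of_eq_perm hnu.antitone_add_rho hmu.antitone_add_rho
    (sPlus_le (by omega)) w heq k
  simpa using this

lemma PrecStep.even_sum_sub {m p : ℕ} {nu mu : Fin m → ℤ} (h : PrecStep p nu mu) :
    Even (∑ k, nu k - ∑ k, mu k) := by
  obtain ⟨-, i, j, l, w, -, -, -, -, -, -, -, heq⟩ := h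
  have hsum : ∑ k, (mu k + rho k) =
      ∑ k, (nu k + rho k) - 2 * ((nu i + rho i) + (nu j + rho j) - l * p) := by
    rw [sum_congr rfl fun k _ => heq k, Equiv.sum_comp w, sum_sPlus]
  rw [sum_add_distrib, sum_add_distrib] at hsum
  exact ⟨(nu i + rho i) + (nu j + rho j) - l * p, by linarith⟩

theorem statement8_general (m p : ℕ)
    (lam mu : Fin m → ℤ) (hlam : IsPartitionVec lam)
    (hprec : Prec p mu lam) :
    (∀ k, mu k ≤ lam k) ∧ Even ((∑ k, lam k) - (∑ k, mu k)) := by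
  suffices IsPartitionVec mu ∧ (∀ k, mu k ≤ lam k) ∧ Even ((∑ k, lam k) - (∑ k, mu k)) from
    this.2
  induction hprec with
  | refl => exact ⟨hlam, fun _ => le_rfl, by simp⟩
  | tail _ hstep ih =>
    obtain ⟨hnu, hle, heven⟩ := ih
    refine ⟨hstep.1, fun k => (hstep.le hnu k).trans (hle k), ?_⟩
    simpa only [sub_add_sub_cancel] using heven.add hstep.even_sum_sub

theorem statement8 (m p : ℕ) (hp : p.Prime) (hodd : Odd p) (hm : 0 < m)
    (lam mu : Fin m → ℤ) (hlam : IsPartitionVec lam) (hmu : IsPartitionVec mu)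
    (hhook : lam ⟨0, hm⟩ + (plen lam : ℤ) ≤ (p : ℤ))
    (hprec : Prec p mu lam) :
    (∀ k, mu k ≤ lam k) ∧ Even ((∑ k, lam k) - (∑ k, mu k)) :=
  statement8_general m p lam mu hlam hprec
end

section
/- Let λ be a partition with at most m parts such that λ_1 + l(λ) ≤ p. Then there exists an integer l₀ ≥ 1 such that every integer l ≥ 1 for which there exist 1 ≤ i < j ≤ l(λ) and an integer a ≥ 1 with (λ+ρ)_i + (λ+ρ)_j = a + lp, (λ+ρ)_j − a > 0, and s_{ε_i+ε_j,l}(λ+ρ) regular, satisfies l ∈ {l₀, l₀ + 1}. (In other words, at most two l-values, and they are consecutive, occur in the reduced Jantzen Sum Formula associated to λ.) -/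
theorem statement9 (m p : ℕ) (hp : p.Prime) (hodd : Odd p) (hm : 0 < m)
    (lam : Fin m → ℤ) (hpart : IsPartitionVec lam)
    (hhook : lam ⟨0, hm⟩ + (plen lam : ℤ) ≤ (p : ℤ)) :
    ∃ l₀ : ℤ, 1 ≤ l₀ ∧
      ∀ l : ℤ, 1 ≤ l →
        (∃ (i j : Fin m) (a : ℤ), i < j ∧ (j : ℕ) < plen lam ∧ 1 ≤ a ∧
          (lam i + rho i) + (lam j + rho j) = a + l * p ∧
          0 < (lam j + rho j) - a ∧
          Regular (sPlus (p : ℤ) i j l (fun t => lam t + rho t))) →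
        l = l₀ ∨ l = l₀ + 1 := by
  classical
  obtain ⟨hdec, hnn⟩ := hpart
  set L : ℕ := plen lam with hLdef
  have hp3 : (3 : ℤ) ≤ (p : ℤ) := by
    have h2 := hp.two_le
    have hne : p ≠ 2 := by
      rintro rfl
      exact (by decide : ¬ Odd 2) hodd
    exact_mod_cast (by omega : 3 ≤ p)
  -- entries at positions ≥ L are zero
  have hzero : ∀ k : Fin m, L ≤ (k : ℕ) → lam k = 0 := by
    intro k hk
    by_contra hne
    have hsub : Finset.Iic k ⊆ Finset.univ.filter (fun i => lam i ≠ 0) := by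
      intro i hi
      simp only [Finset.mem_Iic] at hi
      have h1 := hdec i k hi
      have h2 := hnn k
      simp only [Finset.mem_filter, Finset.mem_univ, true_and]
      intro h0
      apply hne
      omega
    have hcard := Finset.card_le_card hsub
    rw [Fin.card_Iic] at hcard
    have hrfl : (Finset.univ.filter fun i => lam i ≠ 0).card = L := rfl
    omega
  -- entries at positions < L are ≥ 1
  have hone : ∀ k : Fin m, (k : ℕ) < L → 1 ≤ lam k := by
    intro k hk
    by_contra h
    push_neg at h
    have hk0 : lam k = 0 := by have := hnn k; omega
    have hsub : Finset.univ.filter (fun i => lam i ≠ 0) ⊆ Finset.Iio k := by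
      intro i hi
      simp only [Finset.mem_filter, Finset.mem_univ, true_and] at hi
      simp only [Finset.mem_Iio]
      by_contra hki
      push_neg at hki
      have h1 := hdec k i hki
      have h2 := hnn i
      exact hi (by omega)
    have hcard := Finset.card_le_card hsub
    rw [Fin.card_Iio] at hcard
    have hrfl : (Finset.univ.filter fun i => lam i ≠ 0).card = L := rfl
    omega
  -- every value in [1, m - L] occurs as an entry of λ+ρ at a position ≥ L
  have htail : ∀ v : ℤ, 1 ≤ v → v ≤ (m : ℤ) - (L : ℤ) →
      ∃ k : Fin m, L ≤ (k : ℕ) ∧ lam k + rho k = v := by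
    intro v hv1 hv2
    have hvn1 : 1 ≤ v.toNat := by omega
    have hvn2 : v.toNat + L ≤ m := by omega
    refine ⟨⟨m - v.toNat, by omega⟩, by simp; omega, ?_⟩
    have hz : lam ⟨m - v.toNat, by omega⟩ = 0 := hzero _ (by simp; omega)
    rw [hz]
    simp only [rho]
    omega
  -- the predicate
  set Q : ℤ → Prop := fun l => 1 ≤ l ∧
    (∃ (i j : Fin m) (a : ℤ), i < j ∧ (j : ℕ) < L ∧ 1 ≤ a ∧
      (lam i + rho i) + (lam j + rho j) = a + l * p ∧
      0 < (lam j + rho j) - a ∧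
      Regular (sPlus (p : ℤ) i j l (fun t => lam t + rho t))) with hQdef
  -- lower bound
  have hlow : ∀ l : ℤ, Q l → 2 * (m : ℤ) - 2 * L + 4 ≤ l * p := by
    rintro l ⟨hl1, i, j, a, hij, hjL, ha, heq, hpos, hreg⟩
    have hij' : (i : ℕ) < (j : ℕ) := hij
    have hiL : (i : ℕ) + 2 ≤ L := by omega
    have hlami : 1 ≤ lam i := hone i (by omega)
    have hv1 : 0 < l * p - (lam i + rho i) := by linarith
    have hv2 : (m : ℤ) - L + 1 ≤ l * p - (lam i + rho i) := by
      by_contra hcon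
      push_neg at hcon
      obtain ⟨k, hkL, hxk⟩ := htail (l * p - (lam i + rho i)) (by omega) (by omega)
      have hkj : k ≠ j := by
        intro h
        rw [h] at hkL
        omega
      have hki : k ≠ i := by
        intro h
        rw [h] at hkL
        omega
      have hji : j ≠ i := by
        intro h
        rw [h] at hij'
        omega
      have e1 : sPlus (p : ℤ) i j l (fun t => lam t + rho t) j
          = l * p - (lam i + rho i) := by
        simp only [sPlus]
        rw [if_neg hji, if_true]
        ring
      have e2 : sPlus (p : ℤ) i j l (fun t => lam t + rho t) k
          = l * p - (lam i + rho i) := by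
        simp only [sPlus]
        rw [if_neg hki, if_neg hkj, ← hxk]
        ring
      exact hreg.2 k j hkj (by rw [e1, e2])
    have hxi : (m : ℤ) - L + 3 ≤ lam i + rho i := by
      have hiLz : ((i : ℕ) : ℤ) + 2 ≤ (L : ℤ) := by exact_mod_cast hiL
      simp only [rho]
      omega
    linarith
  -- upper bound
  have hup : ∀ l : ℤ, Q l → l * p ≤ 2 * p + 2 * (m : ℤ) - 2 * L - 2 := by
    rintro l ⟨hl1, i, j, a, hij, hjL, ha, heq, hpos, hreg⟩
    have hij' : (i : ℕ) < (j : ℕ) := hij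
    have h0i : lam i ≤ lam ⟨0, hm⟩ := hdec ⟨0, hm⟩ i (by exact Fin.mk_le_of_le_val (by omega))
    have h0j : lam j ≤ lam ⟨0, hm⟩ := hdec ⟨0, hm⟩ j (by exact Fin.mk_le_of_le_val (by omega))
    have hj1 : (1 : ℤ) ≤ ((j : ℕ) : ℤ) := by exact_mod_cast (by omega : 1 ≤ (j : ℕ))
    have hi0 : (0 : ℤ) ≤ ((i : ℕ) : ℤ) := by positivity
    have hxi : lam i + rho i ≤ lam ⟨0, hm⟩ + m := by simp only [rho]; omega
    have hxj : lam j + rho j ≤ lam ⟨0, hm⟩ + m - 1 := by simp only [rho]; omega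
    linarith
  -- any two valid l differ by at most one
  have hQbound : ∀ l l' : ℤ, Q l → Q l' → l' ≤ l + 1 := by
    intro l l' hQl hQl'
    by_contra hcon
    push_neg at hcon
    have h2 : l + 2 ≤ l' := by omega
    have hmul : (l + 2) * p ≤ l' * p := by
      apply mul_le_mul_of_nonneg_right h2 (by positivity)
    have := hlow l hQl
    have := hup l' hQl'
    nlinarith
  by_cases hex : ∃ l, Q l
  · obtain ⟨l₁, hl₁⟩ := hex
    by_cases h2 : Q (l₁ - 1)
    · refine ⟨l₁ - 1, h2.1, ?_⟩
      intro l hl hw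
      have hQl : Q l := ⟨hl, hw⟩
      have b1 := hQbound (l₁ - 1) l h2 hQl
      have b2 := hQbound l l₁ hQl hl₁
      omega
    · refine ⟨l₁, hl₁.1, ?_⟩
      intro l hl hw
      have hQl : Q l := ⟨hl, hw⟩
      have b1 := hQbound l₁ l hl₁ hQl
      have b2 := hQbound l l₁ hQl hl₁
      have : l = l₁ - 1 ∨ l = l₁ ∨ l = l₁ + 1 := by omega
      rcases this with h | h | h
      · exact absurd (h ▸ hQl) h2
      · exact Or.inl h
      · exact Or.inr h
  · refine ⟨1, le_refl 1, ?_⟩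
    intro l hl hw
    exact absurd ⟨l, hl, hw⟩ hex
end

section
/- Let λ be a partition with at most m parts such that λ_1 + l(λ) ≤ p, and fix 1 ≤ i < j ≤ l(λ). Then there is at most one pair (a, l) of positive integers such that (λ+ρ)_i + (λ+ρ)_j = a + lp and the vector s_{ε_i+ε_j,l}(λ+ρ) is regular. (That is, each root ε_i+ε_j with i < j ≤ l(λ) contributes with at most one l-value to the reduced Jantzen Sum Formula of λ.) -/
/-- Entries beyond the length of a partition vanish. -/
lemma plen_zero {m : ℕ} (lam : Fin m → ℤ) (hpart : IsPartitionVec lam)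
    (k : Fin m) (hk : plen lam ≤ (k : ℕ)) : lam k = 0 := by
  by_contra h
  have hsub : Finset.Iic k ⊆ Finset.univ.filter fun t => lam t ≠ 0 := by
    intro t ht
    simp only [Finset.mem_Iic] at ht
    simp only [Finset.mem_filter, Finset.mem_univ, true_and]
    have h1 : lam k ≤ lam t := hpart.1 t k ht
    have h2 : 0 ≤ lam k := hpart.2 k
    have : 0 < lam k := lt_of_le_of_ne h2 (Ne.symm h)
    omega
  have := Finset.card_le_card hsub
  rw [Fin.card_Iic] at this
  unfold plen at hk
  omega

/-- Entries within the length of a partition are positive. -/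
lemma plen_pos {m : ℕ} (lam : Fin m → ℤ) (hpart : IsPartitionVec lam)
    (k : Fin m) (hk : (k : ℕ) < plen lam) : 1 ≤ lam k := by
  by_contra h
  have h0 : lam k = 0 := by have := hpart.2 k; omega
  have hsub : (Finset.univ.filter fun t => lam t ≠ 0) ⊆ Finset.Iio k := by
    intro t ht
    simp only [Finset.mem_filter, Finset.mem_univ, true_and] at ht
    simp only [Finset.mem_Iio]
    by_contra hkt
    have hkt' : k ≤ t := le_of_not_gt hkt
    have h1 : lam t ≤ lam k := hpart.1 k t hkt'
    have h2 : 0 ≤ lam t := hpart.2 t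
    omega
  have := Finset.card_le_card hsub
  rw [Fin.card_Iio] at this
  unfold plen at hk
  omega

theorem statement10 (m p : ℕ) (hp : p.Prime) (hodd : Odd p) (hm : 0 < m)
    (lam : Fin m → ℤ) (hpart : IsPartitionVec lam)
    (hhook : lam ⟨0, hm⟩ + (plen lam : ℤ) ≤ (p : ℤ))
    (i j : Fin m) (hij : i < j) (hjlen : (j : ℕ) < plen lam)
    (a l a' l' : ℤ) (ha : 0 < a) (hl : 0 < l) (ha' : 0 < a') (hl' : 0 < l')
    (heq : (lam i + rho i) + (lam j + rho j) = a + l * p)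
    (heq' : (lam i + rho i) + (lam j + rho j) = a' + l' * p)
    (hreg : Regular (sPlus (p : ℤ) i j l (fun t => lam t + rho t)))
    (hreg' : Regular (sPlus (p : ℤ) i j l' (fun t => lam t + rho t))) :
    a = a' ∧ l = l' := by
  classical
  set c : ℕ := plen lam with hc
  set x : Fin m → ℤ := fun t => lam t + rho t with hx
  have hcm : c ≤ m := by
    have := Finset.card_filter_le Finset.univ (fun t => lam t ≠ 0)
    simpa [hc, plen] using this
  have hpZ : (0 : ℤ) < (p : ℤ) := by exact_mod_cast hp.pos
  have hine : i ≠ j := Fin.ne_of_lt hij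
  have hjpos : 1 ≤ (j : ℕ) := by
    have : (i : ℕ) < (j : ℕ) := hij
    omega
  -- every value n with 1 ≤ n ≤ m - c occurs as x k for some k with c ≤ k
  have hvals : ∀ n : ℤ, 1 ≤ n → n ≤ (m : ℤ) - c →
      ∃ k : Fin m, c ≤ (k : ℕ) ∧ x k = n := by
    intro n h1 h2
    have h1' : 1 ≤ n.toNat := by omega
    have h2' : n.toNat ≤ m - c := by omega
    refine ⟨⟨m - n.toNat, by omega⟩, by show c ≤ m - n.toNat; omega, ?_⟩
    have hz : lam ⟨m - n.toNat, by omega⟩ = 0 :=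
      plen_zero lam hpart _ (by show plen lam ≤ m - n.toNat; omega)
    simp only [hx, hz, rho, Fin.val_mk]
    push_cast
    omega
  -- value of the reflected vector at j
  have hvalj : ∀ t : ℤ, sPlus (p : ℤ) i j t x j = t * p - x i := by
    intro t
    simp [sPlus, hine, Ne.symm hine]
    ring
  -- value of the reflected vector at k ∉ {i, j}
  have hvalk : ∀ (t : ℤ) (k : Fin m), k ≠ i → k ≠ j → sPlus (p : ℤ) i j t x k = x k := by
    intro t k h1 h2
    simp [sPlus, h1, h2]
  -- x i and x j are bounded above
  have hlam0i : lam i ≤ lam ⟨0, hm⟩ := hpart.1 ⟨0, hm⟩ i (by simp [Fin.le_def])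
  have hlam0j : lam j ≤ lam ⟨0, hm⟩ := hpart.1 ⟨0, hm⟩ j (by simp [Fin.le_def])
  have hilen : (i : ℕ) < c := lt_trans hij hjlen
  have hxi : x i = lam i + (m : ℤ) - (i : ℕ) := by simp [hx, rho]; ring
  have hxj : x j = lam j + (m : ℤ) - (j : ℕ) := by simp [hx, rho]; ring
  have hxiub : x i - ((m : ℤ) - c) ≤ (p : ℤ) := by
    rw [hxi]; push_cast; omega
  have hxjub : x j - ((m : ℤ) - c) ≤ (p : ℤ) := by
    rw [hxj]; push_cast; omega
  -- key: for a valid l, l*p - x i > m - c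
  have key : ∀ t : ℤ, 0 < t → Regular (sPlus (p : ℤ) i j t x) →
      (m : ℤ) - c < t * p - x i := by
    intro t ht hregt
    have hne0 : t * p - x i ≠ 0 := by
      have := hregt.1 j
      rwa [hvalj] at this
    have habs : ¬ |t * p - x i| ≤ (m : ℤ) - c := by
      intro hle
      set n : ℤ := |t * p - x i| with hn
      have hn1 : 1 ≤ n := by
        have := abs_pos.mpr hne0
        omega
      obtain ⟨k, hk1, hk2⟩ := hvals n hn1 hle
      have hki : k ≠ i := by
        intro hh; rw [hh] at hk1; omega
      have hkj : k ≠ j := by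
        intro hh; rw [hh] at hk1; omega
      have := hregt.2 j k (Ne.symm hkj)
      rw [hvalj, hvalk t k hki hkj, hk2] at this
      exact this (by rw [← hn, abs_of_nonneg (by omega)])
    push_neg at habs
    have hpt : (p : ℤ) ≤ t * p := by nlinarith
    rcases abs_cases (t * (p : ℤ) - x i) with h | h <;> omega
  have k1 : (m : ℤ) - c < l * p - x i := key l hl hreg
  have k2 : (m : ℤ) - c < l' * p - x i := key l' hl' hreg'
  -- l*p < x i + x j from positivity of a, a'
  have u1 : l * p < x i + x j := by
    have : x i + x j = a + l * p := by rw [hxi, hxj] at *; simp [hx, rho] at heq ⊢; linarith [heq]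
    omega
  have u2 : l' * p < x i + x j := by
    have : x i + x j = a' + l' * p := by rw [hxi, hxj] at *; simp [hx, rho] at heq' ⊢; linarith [heq']
    omega
  -- the interval has length ≤ p, so l = l'
  have hll' : l = l' := by
    by_contra hne
    rcases lt_or_gt_of_ne hne with hlt | hlt
    · have : (l + 1) * p ≤ l' * p := by
        have : l + 1 ≤ l' := by omega
        exact mul_le_mul_of_nonneg_right this hpZ.le
      have : l * p + p ≤ l' * p := by linarith [this]
      omega
    · have : (l' + 1) * p ≤ l * p := by
        have : l' + 1 ≤ l := by omega
        exact mul_le_mul_of_nonneg_right this hpZ.le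
      have : l' * p + p ≤ l * p := by linarith [this]
      omega
  refine ⟨?_, hll'⟩
  rw [hll'] at heq
  omega
end

section
/- Let s ∈ {1,…,m} and let λ, μ ∈ ℤ^m be such that λ_k = μ_k for all k > s. If some element of W_p maps λ to μ, then some element of W_p(C_s) maps λ to μ. Consequently, the same holds for the dot action: if λ and μ are W_p-conjugate under the dot action and agree at all positions > s, then they are W_p(C_s)-conjugate under the dot action. -/
/-- The affine reflection s_{ε_i−ε_j,l} as a bijection of ℤ^m. -/
def sMinusPerm {m : ℕ} (p : ℤ) (i j : Fin m) (h : i ≠ j) (l : ℤ) :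
    Equiv.Perm (Fin m → ℤ) :=
  Function.Involutive.toPerm (sMinus p i j l) (by
    intro x; funext k
    simp only [sMinus]
    by_cases hki : k = i <;> by_cases hkj : k = j <;>
      simp [hki, hkj, h, Ne.symm h] <;> ring)

/-- The affine reflection s_{ε_i+ε_j,l} as a bijection of ℤ^m. -/
def sPlusPerm {m : ℕ} (p : ℤ) (i j : Fin m) (h : i ≠ j) (l : ℤ) :
    Equiv.Perm (Fin m → ℤ) :=
  Function.Involutive.toPerm (sPlus p i j l) (by
    intro x; funext k
    simp only [sPlus]
    by_cases hki : k = i <;> by_cases hkj : k = j <;>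
      simp [hki, hkj, h, Ne.symm h] <;> ring)

/-- The affine reflection s_{2ε_i,l} as a bijection of ℤ^m. -/
def sDoublePerm {m : ℕ} (p : ℤ) (i : Fin m) (l : ℤ) :
    Equiv.Perm (Fin m → ℤ) :=
  Function.Involutive.toPerm (sDouble p i l) (by
    intro x; funext k
    simp only [sDouble]
    by_cases hki : k = i <;> simp [hki] <;> ring)

/-- Generators of W_p(D_s): the reflections s_{ε_i−ε_j,l} and s_{ε_i+ε_j,l}
for 1 ≤ i < j ≤ s (0-indexed: i < j, (j:ℕ) < s) and l ∈ ℤ. -/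
def DGenerators (m : ℕ) (p : ℤ) (s : ℕ) : Set (Equiv.Perm (Fin m → ℤ)) :=
  {σ | ∃ (i j : Fin m) (l : ℤ) (h : i < j), (j : ℕ) < s ∧
        (σ = sMinusPerm p i j h.ne l ∨ σ = sPlusPerm p i j h.ne l)}

/-- The affine Weyl group W_p(D_s). -/
def WpD (m : ℕ) (p : ℤ) (s : ℕ) : Subgroup (Equiv.Perm (Fin m → ℤ)) :=
  Subgroup.closure (DGenerators m p s)

/-- Generators of W_p(C_s): those of W_p(D_s) together with the reflections
s_{2ε_i,l} for 1 ≤ i ≤ s (0-indexed: (i:ℕ) < s) and l ∈ ℤ. -/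
def CGenerators (m : ℕ) (p : ℤ) (s : ℕ) : Set (Equiv.Perm (Fin m → ℤ)) :=
  DGenerators m p s ∪ {σ | ∃ (i : Fin m) (l : ℤ), (i : ℕ) < s ∧ σ = sDoublePerm p i l}

/-- The affine Weyl group W_p(C_s). -/
def WpC (m : ℕ) (p : ℤ) (s : ℕ) : Subgroup (Equiv.Perm (Fin m → ℤ)) :=
  Subgroup.closure (CGenerators m p s)

/-- μ and ν are conjugate under the dot action of the group G:
some element of G maps μ+ρ to ν+ρ. -/
def DotConj {m : ℕ} (G : Subgroup (Equiv.Perm (Fin m → ℤ))) (mu nu : Fin m → ℤ) : Prop :=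
  ∃ g ∈ G, g (fun k => mu k + rho k) = fun k => nu k + rho k

/-! Every element of `W_p(C_m)` moves a point `x` to `y` with `y i = ε i * x (σ i) + p * c i`,
where `σ` permutes the coordinates, the `ε i` are signs and `c` has even coordinate sum: the
linear parts of the reflections are signed permutations and their translation parts span `p`
times the root lattice of type `D_m`. Suppose `x k = y k` for some `k`. If `σ` fixes `k`, then
`p * c k = x k - ε k * x k` is even, so `c k` is even because `p` is odd, and `ε k`, `c k` can be
reset to `1`, `0`; otherwise composing `σ` with the transposition of `k` and `σ⁻¹ k` transfers the
sign and shift at `k` to `σ⁻¹ k`. Either way the data become trivial at `k` and stay trivial where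
they were, so they can be made trivial at every `k ≥ s`. The resulting map is a product of
reflections in the first `s` coordinates: swaps, sign changes, and translations by `p` times
even-sum vectors supported there. -/

open Equiv Finset

theorem Int.even_units_mul_sub (u : ℤˣ) (a : ℤ) : Even (u * a - a) := by
  rcases Int.units_eq_one_or u with rfl | rfl
  · simp
  · exact ⟨-a, by push_cast; ring⟩

theorem Int.even_sum_units_mul_iff {ι : Type*} (s : Finset ι) (u : ι → ℤˣ) (a : ι → ℤ) :
    Even (∑ i ∈ s, u i * a i) ↔ Even (∑ i ∈ s, a i) := by
  rw [← Int.even_sub, ← sum_sub_distrib]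
  exact even_sum _ fun i _ => Int.even_units_mul_sub (u i) (a i)

theorem AddSubgroup.mem_of_support_subset_of_even_sum {ι : Type*} [Fintype ι] [DecidableEq ι]
    {H : AddSubgroup (ι → ℤ)} {S : Set ι}
    (hdiff : ∀ i ∈ S, ∀ j ∈ S, Pi.single i 1 - Pi.single j 1 ∈ H)
    (htwo : ∀ i ∈ S, Pi.single i 2 ∈ H)
    {c : ι → ℤ} (hc : Function.support c ⊆ S) (heven : Even (∑ i, c i)) : c ∈ H := by
  obtain ⟨t, ht⟩ := heven
  rcases S.eq_empty_or_nonempty with rfl | ⟨i₀, hi₀⟩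
  · rw [Set.subset_empty_iff, Function.support_eq_empty_iff] at hc
    exact hc ▸ zero_mem H
  have hc_eq : c = ∑ i, c i • (Pi.single i 1 - Pi.single i₀ 1) + t • Pi.single i₀ 2 := by
    ext k
    by_cases hk : k = i₀
    · subst hk
      simp [Finset.sum_apply, Pi.single_apply, mul_sub, ht]
      ring
    · simp [Finset.sum_apply, Pi.single_apply, hk]
  rw [hc_eq]
  refine add_mem (sum_mem fun i _ => ?_) (zsmul_mem (htwo i₀ hi₀) t)
  by_cases hi : c i = 0
  · simp [hi]
  · exact zsmul_mem (hdiff i (hc hi) i₀ hi₀) _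

def translationLattice {V : Type*} [AddCommGroup V] (p : ℤ) (W : Subgroup (Perm V)) :
    AddSubgroup V where
  carrier := {c | Equiv.addRight (p • c) ∈ W}
  add_mem' {a b} ha hb := by
    simp only [Set.mem_ofPred_eq, smul_add, addRight_add] at *
    exact mul_mem hb ha
  zero_mem' := by simp [one_mem]
  neg_mem' {a} ha := by
    simp only [Set.mem_ofPred_eq, smul_neg, ← neg_addRight] at *
    exact inv_mem ha

theorem mem_translationLattice {V : Type*} [AddCommGroup V] {p : ℤ} {W : Subgroup (Perm V)}
    {c : V} : c ∈ translationLattice p W ↔ Equiv.addRight (p • c) ∈ W :=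
  Iff.rfl

variable {m : ℕ} {p : ℤ} {s : ℕ}

@[simp]
theorem coe_sMinusPerm (i j : Fin m) (h : i ≠ j) (l : ℤ) :
    ⇑(sMinusPerm p i j h l) = sMinus p i j l :=
  rfl

@[simp]
theorem coe_sDoublePerm (i : Fin m) (l : ℤ) : ⇑(sDoublePerm p i l) = sDouble p i l :=
  rfl

theorem sMinusPerm_mem_WpC {i j : Fin m} (hij : i < j) (hj : (j : ℕ) < s) (l : ℤ) :
    sMinusPerm p i j hij.ne l ∈ WpC m p s :=
  Subgroup.subset_closure (Or.inl ⟨i, j, l, hij, hj, Or.inl rfl⟩)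

theorem sDoublePerm_mem_WpC {i : Fin m} (hi : (i : ℕ) < s) (l : ℤ) :
    sDoublePerm p i l ∈ WpC m p s :=
  Subgroup.subset_closure (Or.inr ⟨i, l, hi, rfl⟩)

theorem single_sub_single_mem_translationLattice {i j : Fin m} (hij : i < j) (hj : (j : ℕ) < s) :
    Pi.single i 1 - Pi.single j 1 ∈ translationLattice p (WpC m p s) := by
  have h : Equiv.addRight (p • (Pi.single i 1 - Pi.single j 1 : Fin m → ℤ)) =
      sMinusPerm p i j hij.ne 1 * sMinusPerm p i j hij.ne 0 := by
    ext x k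
    by_cases hki : k = i <;> by_cases hkj : k = j <;>
      simp [sMinus, hki, hkj, hij.ne, hij.ne'] <;> ring
  rw [mem_translationLattice, h]
  exact mul_mem (sMinusPerm_mem_WpC hij hj 1) (sMinusPerm_mem_WpC hij hj 0)

theorem single_two_mem_translationLattice {i : Fin m} (hi : (i : ℕ) < s) :
    Pi.single i 2 ∈ translationLattice p (WpC m p s) := by
  have h : Equiv.addRight (p • (Pi.single i 2 : Fin m → ℤ)) =
      sDoublePerm p i 1 * sDoublePerm p i 0 := by
    ext x k
    by_cases hki : k = i <;> simp [sDouble, hki]; ring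
  rw [mem_translationLattice, h]
  exact mul_mem (sDoublePerm_mem_WpC hi 1) (sDoublePerm_mem_WpC hi 0)

theorem addRight_smul_mem_WpC {c : Fin m → ℤ} (hc : ∀ k : Fin m, s ≤ k → c k = 0)
    (heven : Even (∑ k, c k)) : Equiv.addRight (p • c) ∈ WpC m p s := by
  refine AddSubgroup.mem_of_support_subset_of_even_sum (S := {i : Fin m | (i : ℕ) < s})
    (fun i hi j hj => ?_) (fun i hi => single_two_mem_translationLattice hi)
    (fun k hk => ?_) heven
  · rcases lt_trichotomy i j with hij | rfl | hji
    · exact single_sub_single_mem_translationLattice hij hj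
    · simp [zero_mem]
    · rw [← neg_sub]
      exact neg_mem (single_sub_single_mem_translationLattice hji hi)
  · by_contra hks
    exact hk (hc k (not_lt.mp hks))

theorem toPerm_units_mem_WpC {ε : Fin m → ℤˣ} (hε : ∀ k : Fin m, s ≤ k → ε k = 1) :
    MulAction.toPerm ε ∈ WpC m p s := by
  change ε ∈ (WpC m p s).comap (MulAction.toPermHom _ (Fin m → ℤ))
  rw [← Finset.univ_prod_mulSingle ε]
  refine prod_mem fun i _ => ?_
  rcases Int.units_eq_one_or (ε i) with h | h
  · simp [h, one_mem]
  · have hi : (i : ℕ) < s := by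
      by_contra hi
      rw [hε i (not_lt.mp hi)] at h
      exact absurd h (by decide)
    have : MulAction.toPerm (Pi.mulSingle i (ε i) : Fin m → ℤˣ) = sDoublePerm p i 0 := by
      ext x k
      by_cases hki : k = i <;> simp [sDouble, Units.smul_def, hki, h]; ring
    simpa [Subgroup.mem_comap, this] using sDoublePerm_mem_WpC hi 0

structure SignedPermRep (p : ℤ) (x y : Fin m → ℤ) where
  perm : Perm (Fin m)
  sign : Fin m → ℤˣ
  shift : Fin m → ℤ
  apply_eq : ∀ i, y i = sign i * x (perm i) + p * shift i
  even_sum_shift : Even (∑ i, shift i)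

namespace SignedPermRep

variable {x y z : Fin m → ℤ}

def FixesAt (r : SignedPermRep p x y) (k : Fin m) : Prop :=
  r.perm k = k ∧ r.sign k = 1 ∧ r.shift k = 0

def trans (r : SignedPermRep p x y) (r' : SignedPermRep p y z) : SignedPermRep p x z where
  perm := r.perm * r'.perm
  sign i := r'.sign i * r.sign (r'.perm i)
  shift i := r'.sign i * r.shift (r'.perm i) + r'.shift i
  apply_eq i := by
    rw [r'.apply_eq, r.apply_eq, Perm.mul_apply]
    push_cast
    ring
  even_sum_shift := by
    rw [sum_add_distrib]
    refine Even.add ?_ r'.even_sum_shift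
    rw [Int.even_sum_units_mul_iff, Equiv.sum_comp r'.perm r.shift]
    exact r.even_sum_shift

def ofSMinus (i j : Fin m) (h : i ≠ j) (l : ℤ) (x : Fin m → ℤ) :
    SignedPermRep p x (sMinus p i j l x) where
  perm := swap i j
  sign := 1
  shift := Pi.single i l - Pi.single j l
  apply_eq k := by
    by_cases hki : k = i <;> by_cases hkj : k = j <;>
      simp [sMinus, swap_apply_def, hki, hkj, h, h.symm] <;> ring
  even_sum_shift := by simp [sum_sub_distrib]

def ofSPlus (i j : Fin m) (h : i ≠ j) (l : ℤ) (x : Fin m → ℤ) :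
    SignedPermRep p x (sPlus p i j l x) where
  perm := swap i j
  sign := Pi.mulSingle i (-1) * Pi.mulSingle j (-1)
  shift := Pi.single i l + Pi.single j l
  apply_eq k := by
    by_cases hki : k = i <;> by_cases hkj : k = j <;>
      simp [sPlus, swap_apply_def, hki, hkj, h, h.symm] <;> ring
  even_sum_shift := by simp [sum_add_distrib]

def ofSDouble (i : Fin m) (l : ℤ) (x : Fin m → ℤ) : SignedPermRep p x (sDouble p i l x) where
  perm := 1
  sign := Pi.mulSingle i (-1)
  shift := Pi.single i (2 * l)
  apply_eq k := by
    by_cases hki : k = i <;> simp [sDouble, hki]; ring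
  even_sum_shift := by simp

theorem nonempty_of_mem_WpC {g : Perm (Fin m → ℤ)} (hg : g ∈ WpC m p s)
    (x : Fin m → ℤ) : Nonempty (SignedPermRep p x (g x)) := by
  have hgen : ∀ g ∈ CGenerators m p s, ∀ x, Nonempty (SignedPermRep p x (g x)) := by
    rintro _ (⟨i, j, l, hij, -, rfl | rfl⟩ | ⟨i, l, -, rfl⟩) x
    · exact ⟨.ofSMinus i j hij.ne l x⟩
    · exact ⟨.ofSPlus i j hij.ne l x⟩
    · exact ⟨.ofSDouble i l x⟩
  induction hg using Subgroup.closure_induction'' generalizing x with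
  | mem g hg => exact hgen g hg x
  | inv_mem g hg =>
    have hinv : g⁻¹ = g := by
      rcases hg with ⟨i, j, l, hij, -, rfl | rfl⟩ | ⟨i, l, -, rfl⟩ <;>
        exact Function.Involutive.toPerm_symm _
    exact hinv ▸ hgen g hg x
  | one => exact ⟨⟨1, 1, 0, fun i => by simp, by simp⟩⟩
  | mul g h _ _ ihg ihh =>
    obtain ⟨r⟩ := ihh x
    obtain ⟨r'⟩ := ihg (h x)
    exact ⟨r.trans r'⟩

theorem exists_fixesAt_of_perm_eq (hp : Odd p) (r : SignedPermRep p x y) {k : Fin m}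
    (hk : x k = y k) (hσ : r.perm k = k) :
    ∃ r' : SignedPermRep p x y, r'.FixesAt k ∧ ∀ j, r.FixesAt j → r'.FixesAt j := by
  have hck : Even (r.shift k) := by
    have hpc : p * r.shift k = -(r.sign k * x k - x k) := by
      have := r.apply_eq k
      rw [hσ] at this
      linarith
    have : Even (p * r.shift k) := hpc ▸ (Int.even_units_mul_sub _ _).neg
    exact (Int.even_mul.mp this).resolve_left (Int.not_even_iff_odd.mpr hp)
  refine ⟨⟨r.perm, Function.update r.sign k 1, r.shift - Pi.single k (r.shift k), fun j => ?_, ?_⟩,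
    ⟨hσ, by simp, by simp⟩, fun j hj => ?_⟩
  · by_cases hjk : j = k
    · subst hjk; simp [hσ, ← hk]
    · simp [hjk, r.apply_eq j]
  · simpa [sum_sub_distrib] using r.even_sum_shift.sub hck
  · by_cases hjk : j = k
    · subst hjk; exact ⟨hσ, by simp, by simp⟩
    · exact ⟨hj.1, by simp [hjk, hj.2.1], by simp [hjk, hj.2.2]⟩

theorem exists_fixesAt_of_perm_ne (r : SignedPermRep p x y) {k : Fin m} (hk : x k = y k)
    (hσ : r.perm k ≠ k) :
    ∃ r' : SignedPermRep p x y, r'.FixesAt k ∧ ∀ j, r.FixesAt j → r'.FixesAt j := by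
  set i := r.perm.symm k
  have hσi : r.perm i = k := r.perm.apply_symm_apply k
  have hik : i ≠ k := fun h => hσ (h ▸ hσi)
  refine ⟨⟨r.perm * swap i k, Function.update (Function.update r.sign i (r.sign i * r.sign k)) k 1,
    r.shift + Pi.single i (r.sign i * r.shift k) - Pi.single k (r.shift k), fun j => ?_, ?_⟩,
    ⟨by simp [hσi], by simp, by simp [hik.symm]⟩, fun j hj => ?_⟩
  · by_cases hjk : j = k
    · subst hjk; simp [hσi, hik.symm, ← hk]
    by_cases hji : j = i
    · have hyi := r.apply_eq i
      rw [hσi, hk, r.apply_eq k] at hyi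
      simp [hji, hik, hyi]
      ring
    · simp [hji, hjk, swap_apply_of_ne_of_ne, r.apply_eq j]
  · simpa [sum_add_distrib, sum_sub_distrib, add_sub_assoc] using
      r.even_sum_shift.add (Int.even_units_mul_sub (r.sign i) (r.shift k))
  · have hjk : j ≠ k := fun h => hσ (h ▸ hj.1)
    have hji : j ≠ i := fun h => hik (h ▸ hj.1 ▸ h ▸ hσi)
    exact ⟨by simp [swap_apply_of_ne_of_ne hji hjk, hj.1], by simp [hji, hjk, hj.2.1],
      by simp [hji, hjk, hj.2.2]⟩

theorem exists_fixesAt (hp : Odd p) (r : SignedPermRep p x y) {k : Fin m} (hk : x k = y k) :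
    ∃ r' : SignedPermRep p x y, r'.FixesAt k ∧ ∀ j, r.FixesAt j → r'.FixesAt j :=
  if hσ : r.perm k = k then r.exists_fixesAt_of_perm_eq hp hk hσ
  else r.exists_fixesAt_of_perm_ne hk hσ

theorem exists_forall_fixesAt (hp : Odd p) (r : SignedPermRep p x y) (T : Finset (Fin m))
    (hT : ∀ k ∈ T, x k = y k) : ∃ r' : SignedPermRep p x y, ∀ k ∈ T, r'.FixesAt k := by
  induction T using Finset.induction_on with
  | empty => exact ⟨r, by simp⟩
  | insert k T _ ih =>
    obtain ⟨r₁, h₁⟩ := ih fun j hj => hT j (mem_insert_of_mem hj)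
    obtain ⟨r₂, hk, hpres⟩ := r₁.exists_fixesAt hp (hT k (mem_insert_self k T))
    exact ⟨r₂, forall_mem_insert _ _ _ |>.mpr ⟨hk, fun j hj => hpres j (h₁ j hj)⟩⟩

end SignedPermRep

theorem mem_closure_swap_of_forall_le_apply_eq {σ : Perm (Fin m)}
    (hσ : ∀ k : Fin m, s ≤ k → σ k = k) :
    σ ∈ Subgroup.closure {τ | ∃ a b : Fin m, a < b ∧ (b : ℕ) < s ∧ τ = swap a b} := by
  rw [mem_closure_isSwap (by rintro _ ⟨a, b, hab, -, rfl⟩; exact ⟨a, b, hab.ne, rfl⟩)]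
  refine ⟨Set.toFinite _, fun k => ?_⟩
  by_cases hk : σ k = k
  · rw [hk]; exact MulAction.mem_orbit_self k
  have hks : (k : ℕ) < s := by
    by_contra h; exact hk (hσ k (not_lt.mp h))
  have hσks : (σ k : ℕ) < s := by
    by_contra h; exact hk (σ.injective (hσ (σ k) (not_lt.mp h)))
  have hswap : swap k (σ k) ∈ Subgroup.closure
      {τ | ∃ a b : Fin m, a < b ∧ (b : ℕ) < s ∧ τ = swap a b} := by
    rcases lt_or_gt_of_ne (Ne.symm hk) with h | h
    · exact Subgroup.subset_closure ⟨k, σ k, h, hσks, rfl⟩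
    · exact Subgroup.subset_closure ⟨σ k, k, h, hks, swap_comm _ _⟩
  exact ⟨⟨_, hswap⟩, swap_apply_left k (σ k)⟩

section arrowAction

attribute [local instance] arrowAction

theorem perm_smul_apply (σ : Perm (Fin m)) (x : Fin m → ℤ) (k : Fin m) : (σ • x) k = x (σ⁻¹ k) :=
  rfl

theorem toPerm_perm_mem_WpC {σ : Perm (Fin m)} (hσ : ∀ k : Fin m, s ≤ k → σ k = k) :
    (MulAction.toPerm σ : Perm (Fin m → ℤ)) ∈ WpC m p s := by
  change σ ∈ (WpC m p s).comap (MulAction.toPermHom _ (Fin m → ℤ))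
  refine (Subgroup.closure_le _).mpr ?_ (mem_closure_swap_of_forall_le_apply_eq hσ)
  rintro _ ⟨a, b, hab, hb, rfl⟩
  have : MulAction.toPerm (swap a b) = sMinusPerm p a b hab.ne 0 := by
    ext x k
    by_cases hka : k = a <;> by_cases hkb : k = b <;>
      simp [sMinus, perm_smul_apply, swap_apply_def, hka, hkb, hab.ne, hab.ne']
  simpa [Subgroup.mem_comap, this] using sMinusPerm_mem_WpC hab hb 0

theorem SignedPermRep.exists_mem_WpC {x y : Fin m → ℤ} (r : SignedPermRep p x y)
    (hr : ∀ k : Fin m, s ≤ k → r.FixesAt k) :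
    ∃ g ∈ WpC m p s, g x = y := by
  refine ⟨Equiv.addRight (p • r.shift) * MulAction.toPerm r.sign * MulAction.toPerm r.perm⁻¹,
    mul_mem (mul_mem ?_ ?_) ?_, ?_⟩
  · exact addRight_smul_mem_WpC (fun k hk => (hr k hk).2.2) r.even_sum_shift
  · exact toPerm_units_mem_WpC fun k hk => (hr k hk).2.1
  · exact toPerm_perm_mem_WpC fun k hk => Perm.inv_eq_iff_eq.mpr (hr k hk).1.symm
  · ext i
    simp [perm_smul_apply, Units.smul_def, r.apply_eq i]

end arrowAction

theorem exists_mem_WpC_apply_eq_of_forall_le {t : ℕ} (hp : Odd p) {g : Perm (Fin m → ℤ)}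
    (hg : g ∈ WpC m p t) {x : Fin m → ℤ} (hx : ∀ k : Fin m, s ≤ k → x k = g x k) :
    ∃ g' ∈ WpC m p s, g' x = g x := by
  obtain ⟨r⟩ := SignedPermRep.nonempty_of_mem_WpC hg x
  obtain ⟨r', hr'⟩ := r.exists_forall_fixesAt hp (univ.filter fun k : Fin m => s ≤ k)
    (by simpa using hx)
  exact r'.exists_mem_WpC fun k hk => hr' k (by simpa using hk)

theorem statement13_general (m p : ℕ) (hodd : Odd p)
    (s : ℕ)
    (lam mu : Fin m → ℤ) (hagree : ∀ k : Fin m, s ≤ (k : ℕ) → lam k = mu k) :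
    ((∃ g ∈ WpC m (p : ℤ) m, g lam = mu) → ∃ g ∈ WpC m (p : ℤ) s, g lam = mu) ∧
    ((∃ g ∈ WpC m (p : ℤ) m, g (fun k => lam k + rho k) = fun k => mu k + rho k) →
      ∃ g ∈ WpC m (p : ℤ) s, g (fun k => lam k + rho k) = fun k => mu k + rho k) := by
  refine ⟨?_, ?_⟩
  · rintro ⟨g, hg, rfl⟩
    exact exists_mem_WpC_apply_eq_of_forall_le hodd.natCast hg hagree
  · rintro ⟨g, hg, hgx⟩
    rw [← hgx]
    exact exists_mem_WpC_apply_eq_of_forall_le hodd.natCast hg fun k hk => by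
      simp [hgx, hagree k hk]

theorem statement13 (m p : ℕ) (hp : p.Prime) (hodd : Odd p)
    (s : ℕ) (hs1 : 1 ≤ s) (hsm : s ≤ m)
    (lam mu : Fin m → ℤ) (hagree : ∀ k : Fin m, s ≤ (k : ℕ) → lam k = mu k) :
    ((∃ g ∈ WpC m (p : ℤ) m, g lam = mu) → ∃ g ∈ WpC m (p : ℤ) s, g lam = mu) ∧
    ((∃ g ∈ WpC m (p : ℤ) m, g (fun k => lam k + rho k) = fun k => mu k + rho k) →
      ∃ g ∈ WpC m (p : ℤ) s, g (fun k => lam k + rho k) = fun k => mu k + rho k) :=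
  statement13_general m p hodd s lam mu hagree
end
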